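/- arXiv:2005.03239 — 2 statements merged into one kernel-verified Lean document; each statement's English description precedes it below -/
import Mathlib

section
/- For every function f : Ω → ℝ, the identity E[f]/π_s = E_0[f]/π^0_s + ( E_1[f]/π^1_s − f(s) ) + r1·( E_2[f]/π^2_{s+n1} − f(s+n1) ) holds. (Combined identity, equation (3) of Proposition 1.) -/
open Finset

/-- Departure rate of the two-stage reneging birth-death chain. -/
noncomputable def depRate (s n1 : ℕ) (μ θ1 θ2 : ℝ) (k : ℕ) : ℝ :=
  if k ≤ s then (k : ℝ) * μ
  else if k ≤ s + n1 then (s : ℝ) * μ + ((k : ℝ) - (s : ℝ)) * θ1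
  else (s : ℝ) * μ + (n1 : ℝ) * θ1 + ((k : ℝ) - (s : ℝ) - (n1 : ℝ)) * θ2

/-- Stationary probability of state `k` in the subchain with state set `A`. -/
noncomputable def subProb (π : ℕ → ℝ) (A : Finset ℕ) (k : ℕ) : ℝ :=
  π k / ∑ k' ∈ A, π k'

private lemma sub_ratio (π : ℕ → ℝ) (A : Finset ℕ) (f : ℕ → ℝ) (a : ℕ)
    (hS : (∑ k' ∈ A, π k') ≠ 0) :
    (∑ k ∈ A, f k * subProb π A k) / subProb π A a
      = (∑ k ∈ A, f k * π k) / π a := by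
  unfold subProb
  have h : (∑ k ∈ A, f k * (π k / ∑ k' ∈ A, π k'))
      = (∑ k ∈ A, f k * π k) / ∑ k' ∈ A, π k' := by
    rw [Finset.sum_div]
    exact Finset.sum_congr rfl fun k _ => by rw [mul_div_assoc]
  rw [h, div_div_div_cancel_right₀ hS]

private lemma icc_union_ioc (a b c : ℕ) (h1 : a ≤ b) (h2 : b ≤ c) :
    Finset.Icc a b ∪ Finset.Ioc b c = Finset.Icc a c := by
  rw [← Finset.coe_inj, Finset.coe_union, Finset.coe_Icc, Finset.coe_Ioc,
    Finset.coe_Icc, Set.Icc_union_Ioc_eq_Icc h1 h2]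

theorem stmt_2 (lam μ θ1 θ2 : ℝ) (hlam : 0 < lam) (hμ : 0 < μ)
    (hθ1 : 0 < θ1) (hθ2 : 0 < θ2) (s n1 n2 : ℕ) (hs : 1 ≤ s) (π : ℕ → ℝ)
    (hpos : ∀ k ∈ Finset.Icc 0 (s + n1 + n2), 0 < π k)
    (hbal : ∀ k, 1 ≤ k → k ≤ s + n1 + n2 →
      π k * depRate s n1 μ θ1 θ2 k = π (k - 1) * lam)
    (hsum : ∑ k ∈ Finset.Icc 0 (s + n1 + n2), π k = 1)
    (f : ℕ → ℝ) :
    (∑ k ∈ Finset.Icc 0 (s + n1 + n2), f k * π k) / π s =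
      (∑ k ∈ Finset.Icc 0 s, f k * subProb π (Finset.Icc 0 s) k) / (subProb π (Finset.Icc 0 s) s) + ((∑ k ∈ Finset.Icc s (s + n1), f k * subProb π (Finset.Icc s (s + n1)) k) / (subProb π (Finset.Icc s (s + n1)) s) - f s) +
        (subProb π (Finset.Icc s (s + n1)) (s + n1) / (subProb π (Finset.Icc s (s + n1)) s)) * ((∑ k ∈ Finset.Icc (s + n1) (s + n1 + n2), f k * subProb π (Finset.Icc (s + n1) (s + n1 + n2)) k) / (subProb π (Finset.Icc (s + n1) (s + n1 + n2)) (s + n1)) - f (s + n1)) := by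
  have hposk : ∀ k, k ≤ s + n1 + n2 → 0 < π k := fun k hk =>
    hpos k (Finset.mem_Icc.mpr ⟨Nat.zero_le _, hk⟩)
  have hπs : 0 < π s := hposk s (by omega)
  have hπsn : 0 < π (s + n1) := hposk (s + n1) (by omega)
  have hS0 : 0 < ∑ k' ∈ Finset.Icc 0 s, π k' := by
    apply Finset.sum_pos
    · intro k hk; exact hposk k (by simp at hk; omega)
    · exact ⟨s, Finset.mem_Icc.mpr ⟨Nat.zero_le _, le_rfl⟩⟩
  have hS1 : 0 < ∑ k' ∈ Finset.Icc s (s + n1), π k' := by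
    apply Finset.sum_pos
    · intro k hk; exact hposk k (by simp at hk; omega)
    · exact ⟨s, Finset.mem_Icc.mpr ⟨le_rfl, by omega⟩⟩
  have hS2 : 0 < ∑ k' ∈ Finset.Icc (s + n1) (s + n1 + n2), π k' := by
    apply Finset.sum_pos
    · intro k hk; exact hposk k (by simp at hk; omega)
    · exact ⟨s + n1, Finset.mem_Icc.mpr ⟨le_rfl, by omega⟩⟩
  rw [sub_ratio π _ f s hS0.ne', sub_ratio π _ f s hS1.ne',
    sub_ratio π _ f (s + n1) hS2.ne']
  have hr1 : subProb π (Finset.Icc s (s + n1)) (s + n1) /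
      subProb π (Finset.Icc s (s + n1)) s = π (s + n1) / π s := by
    unfold subProb; rw [div_div_div_cancel_right₀ hS1.ne']
  rw [hr1]
  set g : ℕ → ℝ := fun k => f k * π k with hg
  have hdisj : ∀ a b c d : ℕ, b ≤ c →
      Disjoint (Finset.Icc a b) (Finset.Ioc c d) := by
    intro a b c d h
    rw [Finset.disjoint_left]
    intro x hx hx'
    simp only [Finset.mem_Icc, Finset.mem_Ioc] at hx hx'
    omega
  have htot : (∑ k ∈ Finset.Icc 0 (s + n1 + n2), g k)
      = (∑ k ∈ Finset.Icc 0 s, g k) + (∑ k ∈ Finset.Ioc s (s + n1), g k)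
        + (∑ k ∈ Finset.Ioc (s + n1) (s + n1 + n2), g k) := by
    have hd2 : Disjoint (Finset.Ioc s (s + n1)) (Finset.Ioc (s + n1) (s + n1 + n2)) := by
      rw [Finset.disjoint_left]
      intro x hx hx'
      simp only [Finset.mem_Ioc] at hx hx'
      omega
    rw [← icc_union_ioc 0 s (s + n1 + n2) (by omega) (by omega),
      ← Finset.Ioc_union_Ioc_eq_Ioc (show s ≤ s + n1 by omega)
        (show s + n1 ≤ s + n1 + n2 by omega),
      Finset.sum_union (Finset.disjoint_union_right.mpr
        ⟨hdisj 0 s s _ le_rfl, hdisj 0 s (s + n1) _ (by omega)⟩),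
      Finset.sum_union hd2]
    ring
  have h1 : (∑ k ∈ Finset.Icc s (s + n1), g k)
      = g s + ∑ k ∈ Finset.Ioc s (s + n1), g k :=
    (Finset.add_sum_Ioc_eq_sum_Icc (by omega : s ≤ s + n1)).symm
  have h2 : (∑ k ∈ Finset.Icc (s + n1) (s + n1 + n2), g k)
      = g (s + n1) + ∑ k ∈ Finset.Ioc (s + n1) (s + n1 + n2), g k :=
    (Finset.add_sum_Ioc_eq_sum_Icc (by omega : s + n1 ≤ s + n1 + n2)).symm
  rw [htot, h1, h2, hg]
  field_simp
  ring
end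

section
/- If s1 := s·μ/θ1 is a natural number, then the subchain-1 distribution has the shifted Poisson form: for every 0 ≤ k ≤ n1, π^1_{s+k}/π^1_s = R1^k · s1! / (s1+k)!, where R1 = λ/θ1; equivalently, π^1_{s+k} is proportional to e^{−R1}·R1^{s1+k}/(s1+k)!, the Poisson(R1) probability mass at s1+k. (Subchain-1 form established in the proof of Proposition 3.) -/
open Finset

/-! On `A1` the departure rate at `s + k` is `sμ + kθ1 = (s1 + k)θ1`, so detailed balance reads
`π (s+k+1) (s1+k+1) θ1 = π (s+k) λ`: the recurrence of the Poisson(`R1`) weights `R1^j / j!` at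
`j = s1 + k`. Normalizing over `A1` only rescales. -/

open Nat

theorem eq_pow_mul_factorial_div_factorial_of_recurrence {K : Type*} [Field K] [CharZero K]
    {p : ℕ → K} {lam θ : K} (hθ : θ ≠ 0) {a n : ℕ}
    (h : ∀ k < n, p (k + 1) * (((a + k + 1 : ℕ) : K) * θ) = p k * lam) :
    ∀ k ≤ n, p k = p 0 * (lam / θ) ^ k * (a ! : K) / ((a + k)! : K) := by
  intro k hk
  induction k with
  | zero => simp [factorial_ne_zero]
  | succ k ih =>
    have hrate : ((a + k + 1 : ℕ) : K) * θ ≠ 0 := mul_ne_zero (Nat.cast_ne_zero.2 (by omega)) hθ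
    rw [eq_div_of_mul_eq hrate (h k hk), ih (by omega), ← add_assoc, factorial_succ]
    have : ((a + k)! : K) ≠ 0 := Nat.cast_ne_zero.2 (factorial_ne_zero _)
    push_cast
    rw [pow_succ]
    field_simp

theorem depRate_add_of_le (s n1 : ℕ) (μ θ1 θ2 : ℝ) {k : ℕ} (hk0 : 0 < k) (hk : k ≤ n1) :
    depRate s n1 μ θ1 θ2 (s + k) = s * μ + k * θ1 := by
  rw [depRate, if_neg (by omega), if_pos (by omega)]
  push_cast
  ring

theorem subProb_div_subProb {π : ℕ → ℝ} {A : Finset ℕ} (hA : ∑ k ∈ A, π k ≠ 0) (i j : ℕ) :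
    subProb π A j / subProb π A i = π j / π i := by
  simp only [subProb]
  field_simp

theorem pow_mul_factorial_div_factorial_eq_poisson {R : ℝ} (hR : R ≠ 0) (a k : ℕ) :
    R ^ k * (a ! : ℝ) / ((a + k)! : ℝ) =
      (a ! * Real.exp R / R ^ a) * (Real.exp (-R) * R ^ (a + k) / ((a + k)! : ℝ)) := by
  rw [Real.exp_neg, pow_add]
  field_simp

theorem stmt_18_general (lam μ θ1 θ2 : ℝ) (hlam : 0 < lam)
    (hθ1 : 0 < θ1) (s n1 n2 : ℕ) (π : ℕ → ℝ)
    (hpos : ∀ k ∈ Finset.Icc 0 (s + n1 + n2), 0 < π k)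
    (hbal : ∀ k, 1 ≤ k → k ≤ s + n1 + n2 →
      π k * depRate s n1 μ θ1 θ2 k = π (k - 1) * lam)
    (s1 : ℕ) (hs1 : (s1 : ℝ) = (s : ℝ) * μ / θ1) :
    (∀ k ≤ n1, subProb π (Finset.Icc s (s + n1)) (s + k) / (subProb π (Finset.Icc s (s + n1)) s) =
        (lam / θ1) ^ k * (Nat.factorial s1 : ℝ) / (Nat.factorial (s1 + k) : ℝ)) ∧
    ∃ C : ℝ, ∀ k ≤ n1, subProb π (Finset.Icc s (s + n1)) (s + k) =
        C * (Real.exp (-(lam / θ1)) * (lam / θ1) ^ (s1 + k) / (Nat.factorial (s1 + k) : ℝ)) := by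
  set A := Finset.Icc s (s + n1)
  have hrec : ∀ k < n1, π (s + (k + 1)) * (((s1 + k + 1 : ℕ) : ℝ) * θ1) = π (s + k) * lam := by
    intro k hk
    have hrate : depRate s n1 μ θ1 θ2 (s + (k + 1)) = ((s1 + k + 1 : ℕ) : ℝ) * θ1 := by
      rw [depRate_add_of_le s n1 μ θ1 θ2 (by omega) (by omega)]
      push_cast
      rw [hs1]
      field_simp
      ring
    rw [← hrate, hbal _ (by omega) (by omega)]
    rfl
  have hform :=
    eq_pow_mul_factorial_div_factorial_of_recurrence (p := fun k => π (s + k)) hθ1.ne' hrec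
  have hA : ∑ k ∈ A, π k ≠ 0 := by
    refine (Finset.sum_pos (fun i hi => hpos i ?_) ⟨s, by simp [A]⟩).ne'
    simp only [A, Finset.mem_Icc] at hi ⊢
    omega
  have hπs : π s ≠ 0 := (hpos s (Finset.mem_Icc.2 ⟨by omega, by omega⟩)).ne'
  have hratio : ∀ k ≤ n1, subProb π A (s + k) / subProb π A s =
      (lam / θ1) ^ k * (s1 ! : ℝ) / ((s1 + k)! : ℝ) := by
    intro k hk
    rw [subProb_div_subProb hA, hform k hk, add_zero]
    field_simp
  refine ⟨hratio, subProb π A s * (s1 ! * Real.exp (lam / θ1) / (lam / θ1) ^ s1), fun k hk => ?_⟩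
  have hsub : subProb π A s ≠ 0 := div_ne_zero hπs hA
  rw [mul_assoc, ← pow_mul_factorial_div_factorial_eq_poisson (by positivity), ← hratio k hk,
    mul_div_cancel₀ _ hsub]

theorem stmt_18 (lam μ θ1 θ2 : ℝ) (hlam : 0 < lam) (hμ : 0 < μ)
    (hθ1 : 0 < θ1) (hθ2 : 0 < θ2) (s n1 n2 : ℕ) (hs : 1 ≤ s) (π : ℕ → ℝ)
    (hpos : ∀ k ∈ Finset.Icc 0 (s + n1 + n2), 0 < π k)
    (hbal : ∀ k, 1 ≤ k → k ≤ s + n1 + n2 →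
      π k * depRate s n1 μ θ1 θ2 k = π (k - 1) * lam)
    (hsum : ∑ k ∈ Finset.Icc 0 (s + n1 + n2), π k = 1)
    (s1 : ℕ) (hs1 : (s1 : ℝ) = (s : ℝ) * μ / θ1) :
    (∀ k ≤ n1, subProb π (Finset.Icc s (s + n1)) (s + k) / (subProb π (Finset.Icc s (s + n1)) s) =
        (lam / θ1) ^ k * (Nat.factorial s1 : ℝ) / (Nat.factorial (s1 + k) : ℝ)) ∧
    ∃ C : ℝ, ∀ k ≤ n1, subProb π (Finset.Icc s (s + n1)) (s + k) =
        C * (Real.exp (-(lam / θ1)) * (lam / θ1) ^ (s1 + k) / (Nat.factorial (s1 + k) : ℝ)) :=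
  stmt_18_general lam μ θ1 θ2 hlam hθ1 s n1 n2 π hpos hbal s1 hs1
end
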